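/- For every n ≥ 1, the paraquaternionic Cayley transform C(q,p) = ((p−1)⁻¹·q, (p−1)⁻¹·(p+1)) is a bijection from the set {(q,p) ∈ (Fin n → pH) × pH : ∑ₐ normSq qₐ + normSq p = 1 and normSq(p−1) ≠ 0} onto the set {(q',p') ∈ (Fin n → pH) × pH : re p' = −∑ₐ normSq q'ₐ and normSq(p'−1) ≠ 0}, with inverse map (q',p') ↦ (2·(p'−1)⁻¹·q', (p'−1)⁻¹·(p'+1)). -/

import Mathlib

open scoped Quaternion

/-- The split quaternions (para-quaternions). -/
local notation "pH" => ℍ[ℝ, 1, 1]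

/-- The norm form `normSq p = p * star p` (a real scalar) of signature (2,2). -/
noncomputable def normSq (p : ℍ[ℝ, 1, 1]) : ℝ := (p * star p).re

/-- The inverse of a split quaternion `a` with `normSq a ≠ 0`:
`a⁻¹ = (normSq a)⁻¹ • star a`, a two-sided inverse. -/
noncomputable def pinv (a : ℍ[ℝ, 1, 1]) : ℍ[ℝ, 1, 1] := (normSq a)⁻¹ • star a

/-- The paraquaternionic Cayley transform `C(q,p) = ((p−1)⁻¹·q, (p−1)⁻¹·(p+1))`. -/
noncomputable def cayley (n : ℕ) (x : (Fin n → ℍ[ℝ, 1, 1]) × ℍ[ℝ, 1, 1]) :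
    (Fin n → ℍ[ℝ, 1, 1]) × ℍ[ℝ, 1, 1] :=
  (fun a => pinv (x.2 - 1) * x.1 a, pinv (x.2 - 1) * (x.2 + 1))

/-- The inverse paraquaternionic Cayley transform
`(q',p') ↦ (2·(p'−1)⁻¹·q', (p'−1)⁻¹·(p'+1))`. -/
noncomputable def cayleyInv (n : ℕ) (y : (Fin n → ℍ[ℝ, 1, 1]) × ℍ[ℝ, 1, 1]) :
    (Fin n → ℍ[ℝ, 1, 1]) × ℍ[ℝ, 1, 1] :=
  (fun a => 2 * pinv (y.2 - 1) * y.1 a, pinv (y.2 - 1) * (y.2 + 1))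

/-- The pseudo-sphere minus the locus `Σ₀` where `normSq (p−1) = 0`. -/
noncomputable def pSphere (n : ℕ) : Set ((Fin n → ℍ[ℝ, 1, 1]) × ℍ[ℝ, 1, 1]) :=
  {x | ∑ a, normSq (x.1 a) + normSq x.2 = 1 ∧ normSq (x.2 - 1) ≠ 0}

/-- The hypersurface `Σ` (a realization of the paraquaternionic Heisenberg group)
minus the locus where `normSq (p'−1) = 0`. -/
noncomputable def SigmaSurf (n : ℕ) : Set ((Fin n → ℍ[ℝ, 1, 1]) × ℍ[ℝ, 1, 1]) :=
  {y | y.2.re = -∑ a, normSq (y.1 a) ∧ normSq (y.2 - 1) ≠ 0}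

/-!
The `p`-component of both maps is `p ↦ (p - 1)⁻¹ (p + 1) = 1 + 2 (p - 1)⁻¹`, an involution with
`((p - 1)⁻¹ (p + 1) - 1)⁻¹ = (p - 1) / 2`; this makes `cayleyInv` a two-sided inverse of `cayley`.
Since `normSq` is multiplicative, both defining equations become rational identities in
`normSq p`, `re p` and `∑ normSq qₐ`, via `normSq (p ∓ 1) = normSq p ∓ 2 re p + 1`.
-/

open QuaternionAlgebra

lemma coe_normSq (a : pH) : ((normSq a : ℝ) : pH) = a * star a :=
  (mul_star_eq_coe a).symm

lemma coe_normSq' (a : pH) : ((normSq a : ℝ) : pH) = star a * a := by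
  rw [coe_normSq, star_comm_self']

lemma normSq_eq (a : pH) : normSq a = a.re ^ 2 - a.imI ^ 2 - a.imJ ^ 2 + a.imK ^ 2 := by
  simp only [normSq, re_mul, re_star, imI_star, imJ_star, imK_star]
  ring

lemma normSq_mul (a b : pH) : normSq (a * b) = normSq a * normSq b := by
  simp only [normSq_eq, re_mul, imI_mul, imJ_mul, imK_mul]
  ring

lemma normSq_smul (r : ℝ) (a : pH) : normSq (r • a) = r ^ 2 * normSq a := by
  simp only [normSq_eq, re_smul, imI_smul, imJ_smul, imK_smul, smul_eq_mul]
  ring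

lemma normSq_sub_one (p : pH) : normSq (p - 1) = normSq p - 2 * p.re + 1 := by
  simp only [normSq_eq, re_sub, re_one, imI_sub, imI_one, imJ_sub, imJ_one, imK_sub, imK_one]
  ring

lemma normSq_add_one (p : pH) : normSq (p + 1) = normSq p + 2 * p.re + 1 := by
  simp only [normSq_eq, re_add, re_one, imI_add, imI_one, imJ_add, imJ_one, imK_add, imK_one]
  ring

lemma pinv_mul_cancel {a : pH} (h : normSq a ≠ 0) : pinv a * a = 1 := by
  rw [pinv, smul_mul_assoc, ← coe_normSq', smul_coe, inv_mul_cancel₀ h, coe_one]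

lemma mul_pinv_cancel {a : pH} (h : normSq a ≠ 0) : a * pinv a = 1 := by
  rw [pinv, mul_smul_comm, ← coe_normSq, smul_coe, inv_mul_cancel₀ h, coe_one]

lemma normSq_star (a : pH) : normSq (star a) = normSq a := by
  simp [normSq_eq]

lemma normSq_pinv (a : pH) : normSq (pinv a) = (normSq a)⁻¹ := by
  rw [pinv, normSq_smul, normSq_star]
  rcases eq_or_ne (normSq a) 0 with h | h
  · simp [h]
  · field_simp

lemma pinv_smul (r : ℝ) (a : pH) : pinv (r • a) = r⁻¹ • pinv a := by
  rw [pinv, pinv, normSq_smul, star_smul', smul_smul, smul_smul]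
  congr 1
  rcases eq_or_ne r 0 with h | h
  · simp [h]
  · field_simp

lemma re_pinv (a : pH) : (pinv a).re = a.re / normSq a := by
  simp [pinv, div_eq_inv_mul]

lemma pinv_pinv {a : pH} (h : normSq a ≠ 0) : pinv (pinv a) = a := by
  rw [pinv, normSq_pinv, pinv, star_smul', star_star, smul_smul, inv_inv, mul_inv_cancel₀ h,
    one_smul]

lemma normSq_two : normSq 2 = 4 := by
  norm_num [normSq_eq]

lemma two_mul_eq_smul (x : pH) : 2 * x = (2 : ℝ) • x := by
  rw [two_mul, two_smul]

lemma sum_normSq_mul_left {ι : Type*} [Fintype ι] (c : pH) (q : ι → pH) :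
    ∑ a, normSq (c * q a) = normSq c * ∑ a, normSq (q a) := by
  simp only [normSq_mul, Finset.mul_sum]

noncomputable def pcayley (p : pH) : pH := pinv (p - 1) * (p + 1)

section pcayley

variable {p : pH}

lemma pcayley_eq (h : normSq (p - 1) ≠ 0) : pcayley p = 1 + (2 : ℝ) • pinv (p - 1) := by
  have hsplit : p + 1 = (p - 1) + 2 := by
    rw [sub_add_eq_add_sub, add_sub_assoc]
    norm_num
  rw [pcayley, hsplit, mul_add, pinv_mul_cancel h, mul_two, two_smul]

lemma pcayley_sub_one (h : normSq (p - 1) ≠ 0) : pcayley p - 1 = (2 : ℝ) • pinv (p - 1) := by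
  rw [pcayley_eq h, add_sub_cancel_left]

lemma normSq_pcayley_sub_one_ne (h : normSq (p - 1) ≠ 0) : normSq (pcayley p - 1) ≠ 0 := by
  rw [pcayley_sub_one h, normSq_smul, normSq_pinv]
  simp [h]

lemma pinv_pcayley_sub_one (h : normSq (p - 1) ≠ 0) :
    pinv (pcayley p - 1) = (2 : ℝ)⁻¹ • (p - 1) := by
  rw [pcayley_sub_one h, pinv_smul, pinv_pinv h]

lemma pcayley_pcayley (h : normSq (p - 1) ≠ 0) : pcayley (pcayley p) = p := by
  rw [pcayley_eq (normSq_pcayley_sub_one_ne h), pinv_pcayley_sub_one h, smul_smul,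
    mul_inv_cancel₀ two_ne_zero, one_smul, add_sub_cancel]

lemma re_pcayley (h : normSq (p - 1) ≠ 0) : (pcayley p).re = (normSq p - 1) / normSq (p - 1) := by
  rw [pcayley_eq h, re_add, re_one, re_smul, re_pinv, re_sub, re_one, smul_eq_mul]
  rw [normSq_sub_one] at h ⊢
  field_simp
  ring

lemma normSq_pcayley (p : pH) : normSq (pcayley p) = normSq (p + 1) / normSq (p - 1) := by
  rw [pcayley, normSq_mul, normSq_pinv, inv_mul_eq_div]

end pcayley

lemma cayley_mapsTo (n : ℕ) : Set.MapsTo (cayley n) (pSphere n) (SigmaSurf n) := by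
  rintro ⟨q, p⟩ ⟨hsum, hp⟩
  refine ⟨?_, normSq_pcayley_sub_one_ne hp⟩
  change (pcayley p).re = -∑ a, normSq (pinv (p - 1) * q a)
  rw [re_pcayley hp, sum_normSq_mul_left, normSq_pinv, show ∑ a, normSq (q a) = 1 - normSq p by
    linarith]
  ring

lemma cayleyInv_mapsTo (n : ℕ) : Set.MapsTo (cayleyInv n) (SigmaSurf n) (pSphere n) := by
  rintro ⟨q, p⟩ ⟨hre, hp⟩
  refine ⟨?_, normSq_pcayley_sub_one_ne hp⟩
  change ∑ a, normSq (2 * pinv (p - 1) * q a) + normSq (pcayley p) = 1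
  dsimp only at hre hp
  have hden : normSq (p - 1) = normSq p + 2 * ∑ a, normSq (q a) + 1 := by
    rw [normSq_sub_one, hre]
    ring
  rw [sum_normSq_mul_left, normSq_mul, normSq_pinv, normSq_pcayley, normSq_add_one, normSq_two,
    hre]
  rw [hden] at hp ⊢
  field_simp
  ring

lemma cayley_invOn (n : ℕ) : Set.InvOn (cayleyInv n) (cayley n) (pSphere n) (SigmaSurf n) := by
  constructor
  · rintro ⟨q, p⟩ ⟨-, hp⟩
    refine Prod.ext (funext fun a => ?_) (pcayley_pcayley hp)
    change 2 * pinv (pcayley p - 1) * (pinv (p - 1) * q a) = q a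
    rw [pinv_pcayley_sub_one hp, two_mul_eq_smul, smul_smul, mul_inv_cancel₀ two_ne_zero,
      one_smul, ← mul_assoc, mul_pinv_cancel hp, one_mul]
  · rintro ⟨q, p⟩ ⟨-, hp⟩
    refine Prod.ext (funext fun a => ?_) (pcayley_pcayley hp)
    change pinv (pcayley p - 1) * (2 * pinv (p - 1) * q a) = q a
    rw [pinv_pcayley_sub_one hp, two_mul_eq_smul, smul_mul_assoc, smul_mul_assoc, mul_smul_comm,
      smul_smul, inv_mul_cancel₀ two_ne_zero, one_smul, ← mul_assoc, mul_pinv_cancel hp, one_mul]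

theorem cayley_bijOn_general (n : ℕ) :
    Set.BijOn (cayley n) (pSphere n) (SigmaSurf n) ∧
    Set.InvOn (cayleyInv n) (cayley n) (pSphere n) (SigmaSurf n) :=
  ⟨(cayley_invOn n).bijOn (cayley_mapsTo n) (cayleyInv_mapsTo n), cayley_invOn n⟩

/-- The paraquaternionic Cayley transform is a bijection from the punctured
pseudo-sphere onto the punctured hypersurface `Σ`, with inverse the inverse
Cayley transform. -/
theorem cayley_bijOn (n : ℕ) (hn : 1 ≤ n) :
    Set.BijOn (cayley n) (pSphere n) (SigmaSurf n) ∧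
    Set.InvOn (cayleyInv n) (cayley n) (pSphere n) (SigmaSurf n) :=
  cayley_bijOn_general n
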